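/- arXiv:1604.06372 — 2 statements merged into one kernel-verified Lean document; each statement's English description precedes it below -/
import Mathlib

section
/- Let a be a strongly regular scale factor (extended to ℝ as an even function). The function t₀(τ,ρ) defined implicitly on D = {(τ,ρ) : τ > 0, 0 < ρ < 2ρ_{M_τ}} by ρ = ∫_{t₀}^τ a(t)/√(a(τ)²−a(t)²) dt is continuous on D, including at points where t₀ = 0. -/
/-!
The lower bound `a a'' / a'² ≥ -K` makes `a' · a ^ K` nondecreasing on `(0, ∞)`, so `a' > 0`
there, and hence `a τ ² - a t ² ≥ κ (τ - t)` uniformly for `τ` near `τ₀` and `c ≤ t ≤ τ`.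
After the substitution `t = c + (τ - c) u` the integrand of `F(τ, c) = ∫_c^τ a / √(a τ ² - a ²)`
is dominated by a multiple of `(1 - u)^(-1/2)`, so `F(·, c)` is continuous by dominated
convergence; and `F(τ, ·)` is strictly decreasing. Now if `c₁ < t₀(τ₀, ρ₀) < c₂`, then
`F(τ₀, c₂) < ρ₀ < F(τ₀, c₁)`; these inequalities persist near `(τ₀, ρ₀)` and force
`c₁ < t₀(τ, ρ) < c₂` there.
-/

open Set Filter Topology MeasureTheory intervalIntegral

section EvenExtension

variable {a : ℝ → ℝ}

lemma apply_abs_of_even (heven : ∀ t, a (-t) = a t) (t : ℝ) : a |t| = a t := by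
  rcases abs_choice t with h | h <;> rw [h]
  exact heven t

lemma continuous_of_even (heven : ∀ t, a (-t) = a t) (hcont : ContinuousOn a (Ici 0)) :
    Continuous a := by
  have h : a = a ∘ abs := funext fun t => (apply_abs_of_even heven t).symm
  rw [h]
  exact hcont.comp_continuous continuous_abs abs_nonneg

lemma apply_le_of_abs_le (heven : ∀ t, a (-t) = a t) (hmono : MonotoneOn a (Ici 0)) {t τ : ℝ}
    (h : |t| ≤ τ) : a t ≤ a τ :=
  apply_abs_of_even heven t ▸ hmono (abs_nonneg t) ((abs_nonneg t).trans h) h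

lemma apply_lt_of_abs_lt (heven : ∀ t, a (-t) = a t) (hmono : StrictMonoOn a (Ici 0)) {t τ : ℝ}
    (h : |t| < τ) : a t < a τ :=
  apply_abs_of_even heven t ▸ hmono (abs_nonneg t) ((abs_nonneg t).trans h.le) h

lemma apply_nonneg_of_even (ha0 : a 0 = 0) (heven : ∀ t, a (-t) = a t)
    (hmono : MonotoneOn a (Ici 0)) (t : ℝ) : 0 ≤ a t := by
  simpa [ha0, apply_abs_of_even heven] using
    apply_le_of_abs_le heven hmono (t := 0) (τ := |t|) (by simp)

lemma apply_pos_of_even (ha0 : a 0 = 0) (heven : ∀ t, a (-t) = a t)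
    (hmono : StrictMonoOn a (Ici 0)) {t : ℝ} (ht : t ≠ 0) : 0 < a t := by
  simpa [ha0, apply_abs_of_even heven] using
    apply_lt_of_abs_lt heven hmono (t := 0) (τ := |t|) (by simpa using ht)

lemma sq_lt_sq_of_abs_lt (ha0 : a 0 = 0) (heven : ∀ t, a (-t) = a t)
    (hmono : StrictMonoOn a (Ici 0)) {t τ : ℝ} (h : |t| < τ) : a t ^ 2 < a τ ^ 2 :=
  pow_lt_pow_left₀ (apply_lt_of_abs_lt heven hmono h)
    (apply_nonneg_of_even ha0 heven hmono.monotoneOn t) two_ne_zero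

end EvenExtension

section DerivativeBounds

variable {a : ℝ → ℝ} {K : ℝ}

lemma deriv_nonneg_of_monotoneOn_Ioi (hmono : MonotoneOn a (Ioi 0)) {t : ℝ} (ht : 0 < t) :
    0 ≤ deriv a t := by
  rw [← derivWithin_of_mem_nhds (Ioi_mem_nhds ht)]
  exact hmono.derivWithin_nonneg

lemma monotoneOn_deriv_mul_rpow (hsmooth : ContDiffOn ℝ 2 a (Ioi 0))
    (hmono : MonotoneOn a (Ioi 0)) (hpos : ∀ t > 0, 0 < a t)
    (hK : ∀ t > 0, -K ≤ a t * deriv (deriv a) t / deriv a t ^ 2) :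
    MonotoneOn (fun t => deriv a t * a t ^ K) (Ioi 0) := by
  have hda : ∀ t ∈ Ioi (0 : ℝ), HasDerivAt a (deriv a t) t := fun t ht =>
    ((hsmooth.differentiableOn (by norm_num)).differentiableAt (Ioi_mem_nhds ht)).hasDerivAt
  have hdda : ∀ t ∈ Ioi (0 : ℝ), HasDerivAt (deriv a) (deriv (deriv a) t) t := fun t ht =>
    (((hsmooth.deriv_of_isOpen isOpen_Ioi (m := 1) (by norm_num)).differentiableOn
      (by norm_num)).differentiableAt (Ioi_mem_nhds ht)).hasDerivAt
  have hder : ∀ t ∈ Ioi (0 : ℝ), HasDerivAt (fun t => deriv a t * a t ^ K)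
      (deriv (deriv a) t * a t ^ K + deriv a t * (deriv a t * K * a t ^ (K - 1))) t :=
    fun t ht => (hdda t ht).mul ((hda t ht).rpow_const (Or.inl (hpos t ht).ne'))
  refine monotoneOn_of_deriv_nonneg (convex_Ioi 0)
    (fun t ht => (hder t ht).continuousAt.continuousWithinAt)
    (fun t ht => (hder t (interior_subset ht)).differentiableAt.differentiableWithinAt)
    fun t ht => ?_
  rw [interior_Ioi] at ht
  have hat := hpos t ht
  -- where `a'` vanishes it has a local minimum, so `a''` vanishes as well
  have hcomb : 0 ≤ a t * deriv (deriv a) t + K * deriv a t ^ 2 := by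
    rcases eq_or_ne (deriv a t) 0 with h0 | h0
    · have hmin : IsLocalMin (deriv a) t := by
        filter_upwards [Ioi_mem_nhds ht] with s hs
        rw [h0]
        exact deriv_nonneg_of_monotoneOn_Ioi hmono hs
      simp [h0, hmin.deriv_eq_zero]
    · have := (le_div_iff₀ (by positivity)).1 (hK t ht)
      linarith
  have hsplit : a t ^ K = a t ^ (K - 1) * a t := by
    rw [Real.rpow_sub_one hat.ne', div_mul_cancel₀ _ hat.ne']
  rw [(hder t ht).deriv, hsplit]
  have := mul_nonneg (Real.rpow_nonneg hat.le (K - 1)) hcomb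
  linarith

lemma deriv_pos_of_monotoneOn_deriv_mul_rpow (hsmooth : ContDiffOn ℝ 1 a (Ioi 0))
    (hmono : StrictMonoOn a (Ioi 0)) (hpos : ∀ t > 0, 0 < a t)
    (hK : MonotoneOn (fun t => deriv a t * a t ^ K) (Ioi 0)) {t : ℝ} (ht : 0 < t) :
    0 < deriv a t := by
  have ht2 : 0 < t / 2 := half_pos ht
  obtain ⟨s, hs, hslope⟩ := exists_deriv_eq_slope a (half_lt_self ht)
    (hsmooth.continuousOn.mono fun x hx => ht2.trans_le hx.1)
    ((hsmooth.differentiableOn one_ne_zero).mono fun x hx => ht2.trans hx.1)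
  have hs0 : 0 < s := ht2.trans hs.1
  have hds : 0 < deriv a s := by
    rw [hslope]
    exact div_pos (sub_pos.2 (hmono ht2 ht (half_lt_self ht))) (by linarith)
  have hle := hK hs0 ht hs.2.le
  have hprod : 0 < deriv a t * a t ^ K :=
    (mul_pos hds (Real.rpow_pos_of_pos (hpos s hs0) K)).trans_le hle
  exact pos_of_mul_pos_left hprod (Real.rpow_pos_of_pos (hpos t ht) K).le

lemma exists_pos_mul_sub_le_sub (hsmooth : ContDiffOn ℝ 1 a (Ioi 0))
    (hderiv : ∀ t > 0, 0 < deriv a t) {m : ℝ} (hm : 0 < m) (τ₂ : ℝ) :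
    ∃ δ > 0, ∀ t ∈ Icc m τ₂, ∀ τ ∈ Icc m τ₂, t ≤ τ → δ * (τ - t) ≤ a τ - a t := by
  have hsub : Icc m τ₂ ⊆ Ioi 0 := fun x hx => hm.trans_le hx.1
  obtain ⟨δ, hδ, hδle⟩ := isCompact_Icc.exists_forall_le'
    ((hsmooth.continuousOn_deriv_of_isOpen isOpen_Ioi le_rfl).mono hsub)
    fun t ht => hderiv t (hsub ht)
  exact ⟨δ, hδ, (convex_Icc m τ₂).mul_sub_le_image_sub_of_le_deriv
    (hsmooth.continuousOn.mono hsub) ((hsmooth.differentiableOn one_ne_zero).mono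
      (interior_subset.trans hsub)) fun t ht => hδle t (interior_subset ht)⟩

lemma exists_pos_mul_sub_le_sq_sub_sq (ha0 : a 0 = 0) (heven : ∀ t, a (-t) = a t)
    (hmono : StrictMonoOn a (Ici 0)) (hsmooth : ContDiffOn ℝ 1 a (Ioi 0))
    (hderiv : ∀ t > 0, 0 < deriv a t) {c τ₁ τ₂ : ℝ} (hc : |c| < τ₁) (hτ₁₂ : τ₁ ≤ τ₂) :
    ∃ κ > 0, ∀ τ ∈ Icc τ₁ τ₂, ∀ t ∈ Icc c τ, κ * (τ - t) ≤ a τ ^ 2 - a t ^ 2 := by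
  obtain ⟨m, hcm, hmτ⟩ := exists_between hc
  have hm : 0 < m := (abs_nonneg c).trans_lt hcm
  have hnn := apply_nonneg_of_even ha0 heven hmono.monotoneOn
  have ham : 0 < a m := apply_pos_of_even ha0 heven hmono hm.ne'
  have hη : 0 < a τ₁ ^ 2 - a m ^ 2 :=
    sub_pos.2 (sq_lt_sq_of_abs_lt ha0 heven hmono (by rwa [abs_of_pos hm]))
  have hτc : 0 < τ₂ - c := by linarith [le_abs_self c]
  obtain ⟨δ, hδ, hδle⟩ := exists_pos_mul_sub_le_sub hsmooth hderiv hm τ₂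
  refine ⟨min (δ * a m) ((a τ₁ ^ 2 - a m ^ 2) / (τ₂ - c)), by positivity, ?_⟩
  intro τ hτ t ht
  have hτt : 0 ≤ τ - t := sub_nonneg.2 ht.2
  rcases le_or_gt m t with hmt | htm
  · have hlin := hδle t ⟨hmt, ht.2.trans hτ.2⟩ τ ⟨hmt.trans ht.2, hτ.2⟩ ht.2
    have ham_le : a m ≤ a τ + a t := by
      have := hmono.monotoneOn hm.le (hm.le.trans hmt) hmt
      linarith [hnn τ]
    calc min (δ * a m) _ * (τ - t) ≤ δ * a m * (τ - t) :=
          mul_le_mul_of_nonneg_right (min_le_left _ _) hτt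
      _ = δ * (τ - t) * a m := by ring
      _ ≤ (a τ - a t) * (a τ + a t) :=
          mul_le_mul hlin ham_le ham.le (hlin.trans' (by positivity))
      _ = a τ ^ 2 - a t ^ 2 := by ring
  · have htm' : |t| ≤ m := abs_le.2 ⟨by linarith [neg_abs_le c, ht.1], htm.le⟩
    have hgap : a τ₁ ^ 2 - a m ^ 2 ≤ a τ ^ 2 - a t ^ 2 := by
      have h1 : a τ₁ ≤ a τ :=
        hmono.monotoneOn (hm.le.trans hmτ.le) (hm.le.trans (hmτ.le.trans hτ.1)) hτ.1
      have h2 : a t ≤ a m := apply_le_of_abs_le heven hmono.monotoneOn htm'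
      nlinarith [hnn t, hnn τ₁]
    calc min _ ((a τ₁ ^ 2 - a m ^ 2) / (τ₂ - c)) * (τ - t)
        ≤ (a τ₁ ^ 2 - a m ^ 2) / (τ₂ - c) * (τ₂ - c) :=
          mul_le_mul (min_le_right _ _) (by linarith [hτ.2, ht.1]) hτt (by positivity)
      _ = a τ₁ ^ 2 - a m ^ 2 := div_mul_cancel₀ _ hτc.ne'
      _ ≤ a τ ^ 2 - a t ^ 2 := hgap

end DerivativeBounds

lemma intervalIntegrable_inv_sqrt_sub (x b : ℝ) :
    IntervalIntegrable (fun u => (√(b - u))⁻¹) volume x b := by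
  -- for `y < 0` both sides vanish: `√y = 0`, and `y ^ r` carries the factor `cos (r π) = 0`
  have hrpow : (fun y : ℝ => y ^ (-(1 / 2) : ℝ)) = fun y => (√y)⁻¹ := by
    funext y
    rcases le_or_gt 0 y with hy | hy
    · rw [Real.rpow_neg hy, Real.sqrt_eq_rpow]
    · rw [Real.rpow_def_of_neg hy, Real.sqrt_eq_zero'.2 hy.le, inv_zero,
        show -(1 / 2) * Real.pi = -(Real.pi / 2) by ring, Real.cos_neg, Real.cos_pi_div_two,
        mul_zero]
  have h : IntervalIntegrable (fun y : ℝ => (√y)⁻¹) volume (b - x) (b - b) :=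
    hrpow ▸ intervalIntegrable_rpow' (by norm_num)
  simpa using h.comp_sub_left b

/-- At `t = ±τ` the junk value `x / 0 = 0` makes the integrand vanish. -/
noncomputable def fermiIntegrand (a : ℝ → ℝ) (τ t : ℝ) : ℝ :=
  a t / √(a τ ^ 2 - a t ^ 2)

noncomputable def fermiIntegral (a : ℝ → ℝ) (τ c : ℝ) : ℝ :=
  ∫ t in c..τ, fermiIntegrand a τ t

lemma fermiIntegral_eq_integral_unitInterval (a : ℝ → ℝ) (τ c : ℝ) :
    fermiIntegral a τ c = ∫ u in (0 : ℝ)..1, (τ - c) * fermiIntegrand a τ ((τ - c) * u + c) := by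
  have h := smul_integral_comp_mul_add (f := fermiIntegrand a τ) (a := 0) (b := 1) (τ - c) c
  rw [mul_zero, zero_add, mul_one, sub_add_cancel, smul_eq_mul] at h
  rw [intervalIntegral.integral_const_mul, h, fermiIntegral]

section Fermi

variable {a : ℝ → ℝ}

lemma fermiIntegrand_nonneg (ha0 : a 0 = 0) (heven : ∀ t, a (-t) = a t)
    (hmono : MonotoneOn a (Ici 0)) (τ t : ℝ) : 0 ≤ fermiIntegrand a τ t :=
  div_nonneg (apply_nonneg_of_even ha0 heven hmono t) (Real.sqrt_nonneg _)

lemma measurable_fermiIntegrand (hca : Continuous a) (τ : ℝ) :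
    Measurable (fermiIntegrand a τ) := by
  unfold fermiIntegrand
  fun_prop

lemma continuousAt_fermiIntegrand (ha0 : a 0 = 0) (heven : ∀ t, a (-t) = a t)
    (hmono : StrictMonoOn a (Ici 0)) (hca : Continuous a) {τ t : ℝ} (h : |t| < τ) :
    ContinuousAt (fun p : ℝ × ℝ => fermiIntegrand a p.1 p.2) (τ, t) := by
  have hgap : 0 < a τ ^ 2 - a t ^ 2 := sub_pos.2 (sq_lt_sq_of_abs_lt ha0 heven hmono h)
  unfold fermiIntegrand
  exact ContinuousAt.div (by fun_prop) (by fun_prop) (Real.sqrt_pos.2 hgap).ne'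

lemma exists_fermiIntegrand_le (ha0 : a 0 = 0) (heven : ∀ t, a (-t) = a t)
    (hmono : StrictMonoOn a (Ici 0)) (hsmooth : ContDiffOn ℝ 1 a (Ioi 0))
    (hderiv : ∀ t > 0, 0 < deriv a t) {c τ₁ τ₂ : ℝ} (hc : |c| < τ₁) (hτ₁₂ : τ₁ ≤ τ₂) :
    ∃ A ≥ 0, ∀ τ ∈ Icc τ₁ τ₂, ∀ t ∈ Icc c τ, fermiIntegrand a τ t ≤ A * (√(τ - t))⁻¹ := by
  obtain ⟨κ, hκ, hgap⟩ := exists_pos_mul_sub_le_sq_sub_sq ha0 heven hmono hsmooth hderiv hc hτ₁₂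
  refine ⟨a τ₂ / √κ, div_nonneg (apply_nonneg_of_even ha0 heven hmono.monotoneOn τ₂)
    (Real.sqrt_nonneg κ), fun τ hτ t ht => ?_⟩
  rcases ht.2.eq_or_lt with rfl | htτ
  · simp [fermiIntegrand]
  have hat : a t ≤ a τ₂ := apply_le_of_abs_le heven hmono.monotoneOn
    (abs_le.2 ⟨by linarith [neg_abs_le c, ht.1], by linarith [ht.2, hτ.2]⟩)
  have hκτ : 0 < √(κ * (τ - t)) := Real.sqrt_pos.2 (mul_pos hκ (sub_pos.2 htτ))
  calc fermiIntegrand a τ t ≤ a τ₂ / √(κ * (τ - t)) :=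
        div_le_div₀ ((apply_nonneg_of_even ha0 heven hmono.monotoneOn t).trans hat) hat hκτ
          (Real.sqrt_le_sqrt (hgap τ hτ t ht))
    _ = a τ₂ / √κ * (√(τ - t))⁻¹ := by
        rw [Real.sqrt_mul hκ.le, div_mul_eq_div_div, div_eq_mul_inv (a τ₂ / √κ)]

lemma intervalIntegrable_fermiIntegrand (ha0 : a 0 = 0) (heven : ∀ t, a (-t) = a t)
    (hmono : StrictMonoOn a (Ici 0)) (hca : Continuous a) (hsmooth : ContDiffOn ℝ 1 a (Ioi 0))
    (hderiv : ∀ t > 0, 0 < deriv a t) {c τ : ℝ} (hc : |c| < τ) :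
    IntervalIntegrable (fermiIntegrand a τ) volume c τ := by
  obtain ⟨A, -, hA⟩ := exists_fermiIntegrand_le ha0 heven hmono hsmooth hderiv hc le_rfl
  refine ((intervalIntegrable_inv_sqrt_sub c τ).const_mul A).mono_fun'
    (measurable_fermiIntegrand hca τ).aestronglyMeasurable
    ((ae_restrict_iff' measurableSet_uIoc).2 (Eventually.of_forall fun t ht => ?_))
  rw [uIoc_of_le (by linarith [le_abs_self c])] at ht
  dsimp only
  rw [Real.norm_of_nonneg (fermiIntegrand_nonneg ha0 heven hmono.monotoneOn τ t)]
  exact hA τ ⟨le_rfl, le_rfl⟩ t (Ioc_subset_Icc_self ht)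

lemma fermiIntegral_strictAntiOn (ha0 : a 0 = 0) (heven : ∀ t, a (-t) = a t)
    (hmono : StrictMonoOn a (Ici 0)) (hca : Continuous a) (hsmooth : ContDiffOn ℝ 1 a (Ioi 0))
    (hderiv : ∀ t > 0, 0 < deriv a t) (τ : ℝ) :
    StrictAntiOn (fermiIntegral a τ) (Ioo (-τ) τ) := by
  intro c hc c' hc' hcc'
  have habs : ∀ t ∈ Icc c c', |t| < τ := fun t ht =>
    abs_lt.2 ⟨hc.1.trans_le ht.1, ht.2.trans_lt hc'.2⟩
  have hcont : ContinuousOn (fermiIntegrand a τ) (Icc c c') := fun t ht =>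
    ((continuousAt_fermiIntegrand ha0 heven hmono hca (habs t ht)).comp
      (Continuous.prodMk_right τ).continuousAt).continuousWithinAt
  have hpos : 0 < ∫ t in c..c', fermiIntegrand a τ t := by
    refine integral_pos hcc' hcont
      (fun t _ => fermiIntegrand_nonneg ha0 heven hmono.monotoneOn τ t) ?_
    -- the integrand vanishes only at `t = 0`
    have hgap : ∀ t ∈ Icc c c', 0 < a τ ^ 2 - a t ^ 2 := fun t ht =>
      sub_pos.2 (sq_lt_sq_of_abs_lt ha0 heven hmono (habs t ht))
    rcases ne_or_eq c 0 with h | h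
    · exact ⟨c, left_mem_Icc.2 hcc'.le, div_pos (apply_pos_of_even ha0 heven hmono h)
        (Real.sqrt_pos.2 (hgap c (left_mem_Icc.2 hcc'.le)))⟩
    · exact ⟨c', right_mem_Icc.2 hcc'.le, div_pos
        (apply_pos_of_even ha0 heven hmono (h ▸ hcc').ne')
        (Real.sqrt_pos.2 (hgap c' (right_mem_Icc.2 hcc'.le)))⟩
  have hsplit := integral_add_adjacent_intervals (hcont.intervalIntegrable_of_Icc hcc'.le)
    (intervalIntegrable_fermiIntegrand ha0 heven hmono hca hsmooth hderiv (abs_lt.2 hc'))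
  unfold fermiIntegral
  linarith

lemma continuousAt_fermiIntegral (ha0 : a 0 = 0) (heven : ∀ t, a (-t) = a t)
    (hmono : StrictMonoOn a (Ici 0)) (hca : Continuous a) (hsmooth : ContDiffOn ℝ 1 a (Ioi 0))
    (hderiv : ∀ t > 0, 0 < deriv a t) {c τ₀ : ℝ} (hc : |c| < τ₀) :
    ContinuousAt (fun τ => fermiIntegral a τ c) τ₀ := by
  obtain ⟨τ₁, hcτ₁, hτ₁⟩ := exists_between hc
  obtain ⟨A, hA0, hA⟩ := exists_fermiIntegrand_le ha0 heven hmono hsmooth hderiv hcτ₁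
    (τ₂ := τ₀ + 1) (by linarith)
  have hcτ₀ : -τ₀ < c := (abs_lt.1 hc).1
  simp only [fermiIntegral_eq_integral_unitInterval]
  refine continuousAt_of_dominated_interval
    (bound := fun u => A * √(τ₀ + 1 - c) * (√(1 - u))⁻¹)
    (Eventually.of_forall fun τ => (((measurable_fermiIntegrand hca τ).comp
      (by fun_prop)).const_mul (τ - c)).aestronglyMeasurable) ?_
    ((intervalIntegrable_inv_sqrt_sub 0 1).const_mul _) ?_
  · filter_upwards [Icc_mem_nhds hτ₁ (lt_add_one τ₀)] with τ hτ
    refine Eventually.of_forall fun u hu => ?_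
    rw [uIoc_of_le zero_le_one] at hu
    have hτc : 0 ≤ τ - c := by linarith [le_abs_self c, hτ.1]
    have ht : (τ - c) * u + c ∈ Icc c τ :=
      ⟨by nlinarith [hu.1], by nlinarith [hu.2]⟩
    rw [Real.norm_of_nonneg (mul_nonneg hτc (fermiIntegrand_nonneg ha0 heven hmono.monotoneOn _ _))]
    calc (τ - c) * fermiIntegrand a τ ((τ - c) * u + c)
        ≤ (τ - c) * (A * (√(τ - ((τ - c) * u + c)))⁻¹) :=
          mul_le_mul_of_nonneg_left (hA τ hτ _ ht) hτc
      _ = A * ((τ - c) / √(τ - c)) * (√(1 - u))⁻¹ := by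
          rw [show τ - ((τ - c) * u + c) = (τ - c) * (1 - u) by ring, Real.sqrt_mul hτc]
          ring
      _ ≤ A * √(τ₀ + 1 - c) * (√(1 - u))⁻¹ := by
          rw [Real.div_sqrt]
          gcongr
          exact hτ.2
  · filter_upwards [Measure.ae_ne volume 1] with u hu1 hu
    rw [uIoc_of_le zero_le_one] at hu
    have hu' : u < 1 := lt_of_le_of_ne hu.2 hu1
    have hτc₀ : 0 < τ₀ - c := by linarith [le_abs_self c]
    have habs : |(τ₀ - c) * u + c| < τ₀ := abs_lt.2
      ⟨by linarith [mul_pos hτc₀ hu.1], by linarith [mul_lt_of_lt_one_right hτc₀ hu']⟩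
    exact (continuousAt_id.sub continuousAt_const).mul
      ((continuousAt_fermiIntegrand ha0 heven hmono hca habs).comp
        (f := fun τ => (τ, (τ - c) * u + c)) (by fun_prop))

end Fermi

lemma continuousWithinAt_of_strictAntiOn_of_eq {X : Type*} [TopologicalSpace X] {S : Set X}
    {x₀ : X} {T ρ : X → ℝ} {G : X → ℝ → ℝ} {I : X → Set ℝ} (hx₀ : x₀ ∈ S)
    (hρ : ContinuousWithinAt ρ S x₀) (hT : ∀ x ∈ S, T x ∈ I x ∧ ρ x = G x (T x))
    (hG : ∀ x ∈ S, StrictAntiOn (G x) (I x))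
    (hGc : ∀ c ∈ I x₀, ContinuousWithinAt (fun x => G x c) S x₀)
    (hI : ∀ c ∈ I x₀, ∀ᶠ x in 𝓝[S] x₀, c ∈ I x) (hI₀ : I x₀ ∈ 𝓝 (T x₀)) :
    ContinuousWithinAt T S x₀ := by
  obtain ⟨hT₀, hρ₀⟩ := hT x₀ hx₀
  have below : ∀ c ∈ I x₀, c < T x₀ → ∀ᶠ x in 𝓝[S] x₀, c < T x := by
    intro c hc hlt
    have h₀ : ρ x₀ < G x₀ c := hρ₀ ▸ hG x₀ hx₀ hc hT₀ hlt
    filter_upwards [hρ.eventually_lt (hGc c hc) h₀, hI c hc, self_mem_nhdsWithin]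
      with x hx hcx hxS
    obtain ⟨hTx, hρx⟩ := hT x hxS
    exact ((hG x hxS).lt_iff_gt hTx hcx).1 (hρx ▸ hx)
  have above : ∀ c ∈ I x₀, T x₀ < c → ∀ᶠ x in 𝓝[S] x₀, T x < c := by
    intro c hc hlt
    have h₀ : G x₀ c < ρ x₀ := hρ₀ ▸ hG x₀ hx₀ hT₀ hc hlt
    filter_upwards [(hGc c hc).eventually_lt hρ h₀, hI c hc, self_mem_nhdsWithin]
      with x hx hcx hxS
    obtain ⟨hTx, hρx⟩ := hT x hxS
    exact ((hG x hxS).lt_iff_gt hcx hTx).1 (hρx ▸ hx)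
  refine tendsto_order.2 ⟨fun l hl => ?_, fun u hu => ?_⟩
  · obtain ⟨l', hl', hsub⟩ := exists_Ioc_subset_of_mem_nhds' hI₀ hl
    obtain ⟨c, hc₁, hc₂⟩ := exists_between hl'.2
    exact (below c (hsub ⟨hc₁, hc₂.le⟩) hc₂).mono fun x hx => hl'.1.trans_lt (hc₁.trans hx)
  · obtain ⟨u', hu', hsub⟩ := exists_Ico_subset_of_mem_nhds' hI₀ hu
    obtain ⟨c, hc₁, hc₂⟩ := exists_between hu'.1
    exact (above c (hsub ⟨hc₁.le, hc₂⟩) hc₁).mono fun x hx => hx.trans (hc₂.trans_le hu'.2)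

theorem t0_continuous_general (a : ℝ → ℝ)
    (ha0 : a 0 = 0)
    (heven : ∀ t, a (-t) = a t)
    (hmono : StrictMonoOn a (Set.Ici 0))
    (hcont : ContinuousOn a (Set.Ici 0))
    (hsmooth : ContDiffOn ℝ 2 a (Set.Ioi 0))
    (K : ℝ)
    (hKbound : ∀ t > (0:ℝ), -K ≤ a t * deriv (deriv a) t / (deriv a t) ^ 2)
    (D : Set (ℝ × ℝ))
    (T : ℝ × ℝ → ℝ)
    (hT : ∀ p ∈ D, T p ∈ Set.Ioo (-p.1) p.1 ∧
      p.2 = ∫ t in (T p)..p.1, a t / Real.sqrt ((a p.1) ^ 2 - (a t) ^ 2)) :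
    ContinuousOn T D := by
  have hca : Continuous a := continuous_of_even heven hcont
  have hC1 : ContDiffOn ℝ 1 a (Ioi 0) := hsmooth.of_le one_le_two
  have hpos : ∀ t > 0, 0 < a t := fun t ht => apply_pos_of_even ha0 heven hmono ht.ne'
  have hmono' : StrictMonoOn a (Ioi 0) := hmono.mono Ioi_subset_Ici_self
  have hderiv : ∀ t > 0, 0 < deriv a t := fun t => deriv_pos_of_monotoneOn_deriv_mul_rpow hC1
    hmono' hpos (monotoneOn_deriv_mul_rpow hsmooth hmono'.monotoneOn hpos hKbound)
  intro p hp
  refine continuousWithinAt_of_strictAntiOn_of_eq (I := fun q => Ioo (-q.1) q.1)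
    (G := fun q => fermiIntegral a q.1) hp continuousWithinAt_snd hT
    (fun q _ => fermiIntegral_strictAntiOn ha0 heven hmono hca hC1 hderiv q.1)
    (fun c hc => ((continuousAt_fermiIntegral ha0 heven hmono hca hC1 hderiv
      (abs_lt.2 hc)).comp continuousAt_fst).continuousWithinAt)
    (fun c hc => ?_) (Ioo_mem_nhds (hT p hp).1.1 (hT p hp).1.2)
  filter_upwards [nhdsWithin_le_nhds (continuous_fst.continuousAt.eventually
    (lt_mem_nhds (abs_lt.2 hc)))] with q hq using abs_lt.1 hq

/-- The implicitly defined cosmological time function `t₀(τ, ρ)` is continuous on the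
extended Fermi domain `D`, including where `t₀ = 0`. -/
theorem t0_continuous (a : ℝ → ℝ)
    (ha0 : a 0 = 0)
    (heven : ∀ t, a (-t) = a t)
    (hmono : StrictMonoOn a (Set.Ici 0))
    (hcont : ContinuousOn a (Set.Ici 0))
    (hsmooth : ContDiffOn ℝ 2 a (Set.Ioi 0))
    (hreg : ∀ t > (0:ℝ), a t * deriv (deriv a) t / (deriv a t) ^ 2 ≤ 1)
    (K : ℝ) (hK : 1 ≤ K)
    (hKbound : ∀ t > (0:ℝ), -K ≤ a t * deriv (deriv a) t / (deriv a t) ^ 2)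
    (ρM : ℝ → ℝ)
    (hρM : ∀ τ, ρM τ = ∫ t in (0:ℝ)..τ, a t / Real.sqrt ((a τ) ^ 2 - (a t) ^ 2))
    (D : Set (ℝ × ℝ))
    (hD : D = {p : ℝ × ℝ | 0 < p.1 ∧ 0 < p.2 ∧ p.2 < 2 * ρM p.1})
    (T : ℝ × ℝ → ℝ)
    (hT : ∀ p ∈ D, T p ∈ Set.Ioo (-p.1) p.1 ∧
      p.2 = ∫ t in (T p)..p.1, a t / Real.sqrt ((a p.1) ^ 2 - (a t) ^ 2)) :
    ContinuousOn T D :=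
  t0_continuous_general a ha0 heven hmono hcont hsmooth K hKbound D T hT
end

section
/- Let a be a regular scale factor with lim_{t→0⁺} a'(t) = 0 and a''(t) ≥ 0 near 0. Then for fixed τ > 0, lim_{t₀→0⁺} a'(t₀)·∫_{t₀}^τ (a''(t)/a'(t)²)·dt/√(a(τ)²−a(t)²) = 1/a(τ). -/
/-!
Write `w = 1/√(a(τ)² - a²)`. Since `a''/a'² = (-1/a')'`, integration by parts on `[t₀, δ]` gives
`a'(t₀) ∫_{t₀}^δ (a''/a'²) w = w(t₀) - a'(t₀) w(δ)/a'(δ) + a'(t₀) ∫_{t₀}^δ a/√(a(τ)² - a²)³`,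
because `w' = a' · a/√(a(τ)² - a²)³`. As `a'(t₀) → 0`, only `w(0) = 1/a(τ)` survives. The
remaining integral over `[δ, τ]` is finite, since near `τ` the integrand is a continuous multiple
of `a a'/√(a(τ)² - a²)`, the nonnegative derivative of `-√(a(τ)² - a²)`; so it is killed by the
factor `a'(t₀)` too. All this needs `a' > 0` on `(0, ∞)`, which is where regularity enters.
-/

open Set Filter Topology MeasureTheory intervalIntegral

theorem ContDiffOn.hasDerivAt_deriv_of_isOpen {f : ℝ → ℝ} {s : Set ℝ} (hf : ContDiffOn ℝ 2 f s)
    (hs : IsOpen s) {x : ℝ} (hx : x ∈ s) : HasDerivAt (deriv f) (deriv (deriv f) x) x :=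
  ((hf.deriv_of_isOpen hs (by norm_num : (1 : WithTop ℕ∞) + 1 ≤ 2)).differentiableOn one_ne_zero
    |>.differentiableAt (hs.mem_nhds hx)).hasDerivAt

theorem ContDiffOn.continuousOn_deriv_deriv_of_isOpen {f : ℝ → ℝ} {s : Set ℝ}
    (hf : ContDiffOn ℝ 2 f s) (hs : IsOpen s) : ContinuousOn (deriv (deriv f)) s :=
  (hf.deriv_of_isOpen hs (by norm_num : (1 : WithTop ℕ∞) + 1 ≤ 2)).continuousOn_deriv_of_isOpen hs
    le_rfl

section RegularScaleFactor

variable {a : ℝ → ℝ}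

theorem MonotoneOn.deriv_nonneg_of_isOpen {s : Set ℝ} (hmono : MonotoneOn a s) (hs : IsOpen s)
    {t : ℝ} (ht : t ∈ s) : 0 ≤ deriv a t :=
  hmono.derivWithin_nonneg.trans_eq (derivWithin_of_isOpen hs ht)

/-- `(a'/a)' = (a a'' - a'²)/a²`: where `a' > 0` this is `≤ 0` by regularity, and where `a' = 0`
the nonnegative function `a'` has a local minimum, so `a'' = 0`. -/
theorem antitoneOn_deriv_div_of_regular (hsmooth : ContDiffOn ℝ 2 a (Ioi 0))
    (hmono : MonotoneOn a (Ioi 0)) (ha_pos : ∀ t > 0, 0 < a t)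
    (hreg : ∀ t > (0:ℝ), a t * deriv (deriv a) t / (deriv a t) ^ 2 ≤ 1) :
    AntitoneOn (fun t => deriv a t / a t) (Ioi 0) := by
  have hderiv : ∀ t > 0, HasDerivAt (fun t => deriv a t / a t)
      ((deriv (deriv a) t * a t - deriv a t * deriv a t) / a t ^ 2) t := fun t ht =>
    (hsmooth.hasDerivAt_deriv_of_isOpen isOpen_Ioi ht).div
      ((hsmooth.differentiableOn two_ne_zero).differentiableAt (isOpen_Ioi.mem_nhds ht)).hasDerivAt
      (ha_pos t ht).ne'
  refine antitoneOn_of_deriv_nonpos (convex_Ioi 0)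
    (fun t ht => (hderiv t ht).continuousAt.continuousWithinAt) ?_ ?_ <;> rw [interior_Ioi]
  · exact fun t ht => (hderiv t ht).differentiableAt.differentiableWithinAt
  intro t ht
  rw [(hderiv t ht).deriv]
  refine div_nonpos_of_nonpos_of_nonneg ?_ (sq_nonneg _)
  rcases (hmono.deriv_nonneg_of_isOpen isOpen_Ioi ht).eq_or_lt with h0 | hpos
  · have hmin : IsLocalMin (deriv a) t := by
      filter_upwards [isOpen_Ioi.mem_nhds ht] with s hs
      exact h0 ▸ hmono.deriv_nonneg_of_isOpen isOpen_Ioi hs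
    simp [hmin.deriv_eq_zero, ← h0]
  · have := hreg t ht
    rw [div_le_one (by positivity)] at this
    nlinarith

theorem deriv_pos_of_regular (hsmooth : ContDiffOn ℝ 2 a (Ioi 0))
    (hmono : StrictMonoOn a (Ioi 0)) (ha_pos : ∀ t > 0, 0 < a t)
    (hreg : ∀ t > (0:ℝ), a t * deriv (deriv a) t / (deriv a t) ^ 2 ≤ 1) {s : ℝ} (hs : 0 < s) :
    0 < deriv a s := by
  refine (hmono.monotoneOn.deriv_nonneg_of_isOpen isOpen_Ioi hs).lt_of_ne fun h0 => ?_
  have hdiff : DifferentiableOn ℝ a (Ioi 0) := hsmooth.differentiableOn two_ne_zero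
  obtain ⟨c, hc, hslope⟩ := exists_deriv_eq_slope a (lt_add_one s)
    (hdiff.continuousOn.mono fun t ht => hs.trans_le ht.1)
    (hdiff.mono fun t ht => hs.trans ht.1)
  have hc0 : 0 < c := hs.trans hc.1
  have hslope_pos : 0 < deriv a c := by
    rw [hslope]
    exact div_pos (sub_pos.2 (hmono hs (hs.trans (lt_add_one s)) (lt_add_one s))) (by linarith)
  have hq := antitoneOn_deriv_div_of_regular hsmooth hmono.monotoneOn ha_pos hreg hs hc0 hc.1.le
  simp only [← h0, zero_div] at hq
  exact (div_pos hslope_pos (ha_pos c hc0)).not_ge hq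

end RegularScaleFactor

theorem HasDerivAt.sqrt_sq_sub_sq {a : ℝ → ℝ} {a' t : ℝ} (c : ℝ) (ha : HasDerivAt a a' t)
    (hlt : a t ^ 2 < c ^ 2) :
    HasDerivAt (fun s => √(c ^ 2 - a s ^ 2)) (-(a t * a') / √(c ^ 2 - a t ^ 2)) t := by
  have hpos : 0 < c ^ 2 - a t ^ 2 := sub_pos.2 hlt
  refine ((ha.fun_pow 2).const_sub (c ^ 2)).sqrt hpos.ne' |>.congr_deriv ?_
  have : 0 < √(c ^ 2 - a t ^ 2) := Real.sqrt_pos.2 hpos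
  norm_num
  field_simp

theorem HasDerivAt.inv_sqrt_sq_sub_sq {a : ℝ → ℝ} {a' t : ℝ} (c : ℝ) (ha : HasDerivAt a a' t)
    (hlt : a t ^ 2 < c ^ 2) :
    HasDerivAt (fun s => (√(c ^ 2 - a s ^ 2))⁻¹) (a' * (a t / √(c ^ 2 - a t ^ 2) ^ 3)) t := by
  have : 0 < √(c ^ 2 - a t ^ 2) := Real.sqrt_pos.2 (sub_pos.2 hlt)
  refine (ha.sqrt_sq_sub_sq c hlt).fun_inv this.ne' |>.congr_deriv ?_
  field_simp

theorem tendsto_mul_integral_deriv_div_sq_mul {d d' w ψ : ℝ → ℝ} {δ : ℝ} (hδ : 0 < δ)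
    (hd : ∀ t ∈ Ioc 0 δ, HasDerivAt d (d' t) t) (hd_ne : ∀ t ∈ Ioc 0 δ, d t ≠ 0)
    (hd' : ContinuousOn d' (Ioc 0 δ)) (hd0 : Tendsto d (𝓝[>] 0) (𝓝 0))
    (hw : ∀ t ∈ Ioc 0 δ, HasDerivAt w (d t * ψ t) t) (hw0 : ContinuousWithinAt w (Ioi 0) 0)
    (hψ : ContinuousOn ψ (Icc 0 δ)) :
    Tendsto (fun t₀ => d t₀ * ∫ t in t₀..δ, d' t / d t ^ 2 * w t) (𝓝[>] 0) (𝓝 (w 0)) := by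
  have hdc : ContinuousOn d (Ioc 0 δ) := fun t ht => (hd t ht).continuousAt.continuousWithinAt
  have hparts : ∀ t₀ ∈ Ioc 0 δ, d t₀ * ∫ t in t₀..δ, d' t / d t ^ 2 * w t =
      w t₀ - d t₀ * (w δ / d δ) + d t₀ * ∫ t in t₀..δ, ψ t := by
    intro t₀ ht₀
    have hsub : uIcc t₀ δ ⊆ Ioc 0 δ := by
      rw [uIcc_of_le ht₀.2]; exact Icc_subset_Ioc_left ht₀.1
    have hinv : ∀ t ∈ uIcc t₀ δ, HasDerivAt (fun t => -(d t)⁻¹) (d' t / d t ^ 2) t := by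
      intro t ht
      simpa [neg_div] using ((hd t (hsub ht)).fun_inv (hd_ne t (hsub ht))).fun_neg
    have hibp := integral_mul_deriv_eq_deriv_mul (fun t ht => hw t (hsub ht)) hinv
      (((hdc.mono hsub).mul (hψ.mono fun t ht => Ioc_subset_Icc_self (hsub ht))).intervalIntegrable)
      (((hd'.mono hsub).div ((hdc.mono hsub).pow 2)
        fun t ht => pow_ne_zero 2 (hd_ne t (hsub ht))).intervalIntegrable)
    have hcancel : EqOn (fun t => d t * ψ t * -(d t)⁻¹) (fun t => -ψ t) (uIcc t₀ δ) :=
      fun t ht => by field_simp [hd_ne t (hsub ht)]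
    simp_rw [mul_comm _ (w _)]
    rw [hibp, integral_congr hcancel, intervalIntegral.integral_neg]
    field_simp [hd_ne t₀ ht₀, hd_ne δ ⟨hδ, le_rfl⟩]
    ring
  have hprim : Tendsto (fun t₀ => ∫ t in t₀..δ, ψ t) (𝓝[>] 0) (𝓝 (∫ t in 0..δ, ψ t)) := by
    have := continuousOn_primitive_interval_left (a := 0) (b := δ) (μ := volume)
      (by rw [uIcc_of_le hδ.le]; exact hψ.integrableOn_Icc)
    rw [uIcc_of_le hδ.le] at this
    exact (this 0 (left_mem_Icc.2 hδ.le)).mono_of_mem_nhdsWithin (Icc_mem_nhdsGT hδ)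
  have hlim := (hw0.tendsto.sub (hd0.mul_const (w δ / d δ))).add (hd0.mul hprim)
  rw [zero_mul, zero_mul, sub_zero, add_zero] at hlim
  exact hlim.congr' (eventually_of_mem (Ioc_mem_nhdsGT hδ) fun t₀ ht₀ => (hparts t₀ ht₀).symm)

theorem tendsto_mul_integral_deriv_div_sq_div_sqrt {a a' a'' : ℝ → ℝ} {c δ : ℝ} (hδ : 0 < δ)
    (ha : ∀ t ∈ Ioc 0 δ, HasDerivAt a (a' t) t) (ha' : ∀ t ∈ Ioc 0 δ, HasDerivAt a' (a'' t) t)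
    (ha'_ne : ∀ t ∈ Ioc 0 δ, a' t ≠ 0) (ha'' : ContinuousOn a'' (Ioc 0 δ))
    (ha'0 : Tendsto a' (𝓝[>] 0) (𝓝 0)) (hac : ContinuousOn a (Icc 0 δ))
    (hlt : ∀ t ∈ Icc 0 δ, a t ^ 2 < c ^ 2) :
    Tendsto (fun t₀ => a' t₀ * ∫ t in t₀..δ, a'' t / a' t ^ 2 / √(c ^ 2 - a t ^ 2)) (𝓝[>] 0)
      (𝓝 (√(c ^ 2 - a 0 ^ 2))⁻¹) := by
  have hsqrt : ContinuousOn (fun t => √(c ^ 2 - a t ^ 2)) (Icc 0 δ) :=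
    (continuousOn_const.sub (hac.pow 2)).sqrt
  have hsqrt_ne : ∀ t ∈ Icc 0 δ, √(c ^ 2 - a t ^ 2) ≠ 0 := fun t ht =>
    (Real.sqrt_pos.2 (sub_pos.2 (hlt t ht))).ne'
  simp only [div_eq_mul_inv _ √(_ - _)]
  exact tendsto_mul_integral_deriv_div_sq_mul hδ ha' ha'_ne ha'' ha'0
    (fun t ht => (ha t ht).inv_sqrt_sq_sub_sq c (hlt t (Ioc_subset_Icc_self ht)))
    ((hsqrt.inv₀ hsqrt_ne) 0 (left_mem_Icc.2 hδ.le) |>.mono_of_mem_nhdsWithin (Icc_mem_nhdsGT hδ))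
    (hac.div (hsqrt.pow 3) fun t ht => pow_ne_zero 3 (hsqrt_ne t ht))

theorem tendsto_mul_integral_extend_upper {d f : ℝ → ℝ} {δ τ L : ℝ}
    (hδ : 0 < δ) (hδτ : δ ≤ τ) (hf : ∀ t₀ ∈ Ioc 0 δ, IntervalIntegrable f volume t₀ τ)
    (hd0 : Tendsto d (𝓝[>] 0) (𝓝 0))
    (h : Tendsto (fun t₀ => d t₀ * ∫ t in t₀..δ, f t) (𝓝[>] 0) (𝓝 L)) :
    Tendsto (fun t₀ => d t₀ * ∫ t in t₀..τ, f t) (𝓝[>] 0) (𝓝 L) := by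
  have hlim := h.add (hd0.mul_const (∫ t in δ..τ, f t))
  rw [zero_mul, add_zero] at hlim
  refine hlim.congr' (eventually_of_mem (Ioc_mem_nhdsGT hδ) fun t₀ ht₀ => ?_)
  have hf₀ := (hf t₀ ht₀).mono_set (uIcc_subset_uIcc left_mem_uIcc (mem_uIcc_of_le ht₀.2 hδτ))
  rw [← mul_add, integral_add_adjacent_intervals hf₀ (hf δ ⟨hδ, le_rfl⟩)]

theorem intervalIntegrable_div_sqrt_sq_sub_sq {a a' h : ℝ → ℝ} {δ τ : ℝ} (hδτ : δ ≤ τ)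
    (ha : ∀ t ∈ Icc δ τ, HasDerivAt a (a' t) t) (ha' : ContinuousOn a' (Icc δ τ))
    (ha_pos : ∀ t ∈ Icc δ τ, 0 < a t) (ha'_pos : ∀ t ∈ Icc δ τ, 0 < a' t)
    (hh : ContinuousOn h (Icc δ τ)) :
    IntervalIntegrable (fun t => h t / √(a τ ^ 2 - a t ^ 2)) volume δ τ := by
  have hac : ContinuousOn a (Icc δ τ) := fun t ht => (ha t ht).continuousAt.continuousWithinAt
  have hstrict : StrictMonoOn a (Icc δ τ) := by
    refine strictMonoOn_of_deriv_pos (convex_Icc δ τ) hac fun t ht => ?_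
    rw [interior_Icc] at ht
    rw [(ha t (Ioo_subset_Icc_self ht)).deriv]
    exact ha'_pos t (Ioo_subset_Icc_self ht)
  have hsing : IntervalIntegrable (fun t => a t * a' t / √(a τ ^ 2 - a t ^ 2)) volume δ τ := by
    refine intervalIntegrable_deriv_of_nonneg (g := fun t => -√(a τ ^ 2 - a t ^ 2)) ?_ ?_ ?_
    · rw [uIcc_of_le hδτ]
      exact ((continuousOn_const.sub (hac.pow 2)).sqrt).neg
    · intro t ht
      rw [min_eq_left hδτ, max_eq_right hδτ] at ht
      have hpos : a t ^ 2 < a τ ^ 2 :=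
        pow_lt_pow_left₀ (hstrict (Ioo_subset_Icc_self ht) (right_mem_Icc.2 hδτ) ht.2)
          (ha_pos t (Ioo_subset_Icc_self ht)).le two_ne_zero
      simpa [neg_div] using ((ha t (Ioo_subset_Icc_self ht)).sqrt_sq_sub_sq (a τ) hpos).fun_neg
    · intro t ht
      rw [min_eq_left hδτ, max_eq_right hδτ] at ht
      have := ha_pos t (Ioo_subset_Icc_self ht)
      have := ha'_pos t (Ioo_subset_Icc_self ht)
      positivity
  have hbdd : ContinuousOn (fun t => h t / (a t * a' t)) (uIcc δ τ) := by
    rw [uIcc_of_le hδτ]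
    exact hh.div (hac.mul ha') fun t ht => (mul_pos (ha_pos t ht) (ha'_pos t ht)).ne'
  refine (hsing.continuousOn_mul hbdd).congr ?_
  rw [uIoc_of_le hδτ]
  exact fun t ht => div_mul_div_cancel₀ (mul_pos (ha_pos t (Ioc_subset_Icc_self ht))
    (ha'_pos t (Ioc_subset_Icc_self ht))).ne'

theorem weighted_integral_limit_general (a : ℝ → ℝ)
    (ha0 : a 0 = 0)
    (hmono : StrictMonoOn a (Set.Ici 0))
    (hcont : ContinuousOn a (Set.Ici 0))
    (hsmooth : ContDiffOn ℝ 2 a (Set.Ioi 0))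
    (hreg : ∀ t > (0:ℝ), a t * deriv (deriv a) t / (deriv a t) ^ 2 ≤ 1)
    (hderiv0 : Filter.Tendsto (deriv a) (nhdsWithin 0 (Set.Ioi 0)) (nhds 0)) :
    ∀ τ > (0:ℝ),
      Filter.Tendsto
        (fun t₀ => deriv a t₀ * ∫ t in t₀..τ,
          (deriv (deriv a) t / (deriv a t) ^ 2) / Real.sqrt ((a τ) ^ 2 - (a t) ^ 2))
        (nhdsWithin 0 (Set.Ioi 0)) (nhds (1 / a τ)) := by
  intro τ hτ
  have ha_pos : ∀ t > 0, 0 < a t := fun t ht => ha0 ▸ hmono self_mem_Ici ht.le ht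
  have hd_pos : ∀ t > 0, 0 < deriv a t := fun t =>
    deriv_pos_of_regular hsmooth (hmono.mono Ioi_subset_Ici_self) ha_pos hreg
  have hda : ∀ t > 0, HasDerivAt a (deriv a t) t := fun t ht =>
    ((hsmooth.differentiableOn two_ne_zero).differentiableAt (isOpen_Ioi.mem_nhds ht)).hasDerivAt
  have hdda : ∀ t > 0, HasDerivAt (deriv a) (deriv (deriv a) t) t := fun t =>
    hsmooth.hasDerivAt_deriv_of_isOpen isOpen_Ioi
  have hda_cont : ContinuousOn (deriv a) (Ioi 0) := fun t ht =>
    (hdda t ht).continuousAt.continuousWithinAt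
  have hdda_cont : ContinuousOn (deriv (deriv a)) (Ioi 0) :=
    hsmooth.continuousOn_deriv_deriv_of_isOpen isOpen_Ioi
  have hδ : 0 < τ / 2 := half_pos hτ
  have hlt : ∀ t ∈ Icc 0 (τ / 2), a t ^ 2 < a τ ^ 2 := fun t ht =>
    pow_lt_pow_left₀ (hmono ht.1 hτ.le (by linarith [ht.2]))
      (ha0 ▸ hmono.monotoneOn self_mem_Ici ht.1 ht.1) two_ne_zero
  have hhead := tendsto_mul_integral_deriv_div_sq_div_sqrt hδ (fun t ht => hda t ht.1)
    (fun t ht => hdda t ht.1) (fun t ht => (hd_pos t ht.1).ne') (hdda_cont.mono fun t ht => ht.1)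
    hderiv0 (hcont.mono Icc_subset_Ici_self) hlt
  rw [ha0, zero_pow two_ne_zero, sub_zero, Real.sqrt_sq (ha_pos τ hτ).le, ← one_div] at hhead
  refine tendsto_mul_integral_extend_upper hδ (by linarith) (fun t₀ ht₀ => ?_)
    hderiv0 hhead
  have hsub : Icc t₀ τ ⊆ Ioi 0 := fun t ht => ht₀.1.trans_le ht.1
  exact intervalIntegrable_div_sqrt_sq_sub_sq (by linarith [ht₀.2]) (fun t ht => hda t (hsub ht))
    (hda_cont.mono hsub) (fun t ht => ha_pos t (hsub ht)) (fun t ht => hd_pos t (hsub ht))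
    ((hdda_cont.div (hda_cont.pow 2) fun t ht => pow_ne_zero 2 (hd_pos t ht).ne').mono hsub)

/-- If `a'(0⁺) = 0` and `a'' ≥ 0` near `0`, then
`a'(t₀) · ∫_{t₀}^τ (a''/a'²)/√(a(τ)²−a(t)²) dt → 1/a(τ)` as `t₀ → 0⁺`. -/
theorem weighted_integral_limit (a : ℝ → ℝ)
    (ha0 : a 0 = 0)
    (hmono : StrictMonoOn a (Set.Ici 0))
    (hcont : ContinuousOn a (Set.Ici 0))
    (hsmooth : ContDiffOn ℝ 2 a (Set.Ioi 0))
    (hreg : ∀ t > (0:ℝ), a t * deriv (deriv a) t / (deriv a t) ^ 2 ≤ 1)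
    (hderiv0 : Filter.Tendsto (deriv a) (nhdsWithin 0 (Set.Ioi 0)) (nhds 0))
    (ε : ℝ) (hε : 0 < ε)
    (hconv : ∀ t ∈ Set.Ioo (0:ℝ) ε, 0 ≤ deriv (deriv a) t) :
    ∀ τ > (0:ℝ),
      Filter.Tendsto
        (fun t₀ => deriv a t₀ * ∫ t in t₀..τ,
          (deriv (deriv a) t / (deriv a t) ^ 2) / Real.sqrt ((a τ) ^ 2 - (a t) ^ 2))
        (nhdsWithin 0 (Set.Ioi 0)) (nhds (1 / a τ)) :=
  weighted_integral_limit_general a ha0 hmono hcont hsmooth hreg hderiv0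
end
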